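/- arXiv:1304.3360 — 4 statements merged into one kernel-verified Lean document; each statement's English description precedes it below -/
import Mathlib

section
/- Let γ : ℝ^k × Q → ℝ^k × (T¹_k)*Q be a section of (π_Q)_{1,0} with components γ^α_i(x,q) satisfying the closedness condition ∂γ^α_i/∂q^j = ∂γ^α_j/∂q^i, and let H be a Hamiltonian. If the Hamilton–Jacobi condition ∂H/∂q^i ∘ γ + (∂H/∂p^α_j ∘ γ)(∂γ^α_j/∂q^i) + ∂γ^α_i/∂x^α = 0 holds (for all i, summing over α and j), and ψ(x) = (x, ψ^i(x)) is a solution of ∂ψ^i/∂x^α = (∂H/∂p^α_i) ∘ γ ∘ ψ, then γ ∘ ψ satisfies the Hamilton–De Donder–Weyl equations: ∂ψ^i/∂x^α = ∂H/∂p^α_i |_{γ(ψ(x))} and ∑_{α=1}^k ∂(γ^α_i ∘ ψ)/∂x^α = −∂H/∂q^i |_{γ(ψ(x))}. -/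
/-- The model phase space M = ℝᵏ × (T¹ₖ)*Q in Darboux coordinates (xᵅ, qⁱ, pᵅᵢ). -/
abbrev PhaseSpace (k n : ℕ) := (Fin k → ℝ) × (Fin n → ℝ) × (Fin k → Fin n → ℝ)

theorem stmt_7 (k n : ℕ)
    (H : PhaseSpace k n → ℝ) (hH : ContDiff ℝ (⊤ : ℕ∞) H)
    (γ : Fin k → Fin n → ((Fin k → ℝ) × (Fin n → ℝ)) → ℝ)
    (hγ : ∀ α i, ContDiff ℝ (⊤ : ℕ∞) (γ α i))
    -- closedness condition ∂γᵅᵢ/∂qʲ = ∂γᵅⱼ/∂qⁱ: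
    (hsym : ∀ α i j p, fderiv ℝ (γ α i) p ((0 : Fin k → ℝ), Pi.single j 1)
        = fderiv ℝ (γ α j) p ((0 : Fin k → ℝ), Pi.single i 1))
    (Γ : ((Fin k → ℝ) × (Fin n → ℝ)) → PhaseSpace k n)
    (hΓ : ∀ p, Γ p = (p.1, p.2, fun α i => γ α i p))
    -- the Hamilton–Jacobi condition:
    (hHJ : ∀ p i,
      fderiv ℝ H (Γ p) (0, Pi.single i 1, 0)
      + (∑ α : Fin k, ∑ j : Fin n,
          fderiv ℝ H (Γ p) (0, 0, Pi.single α (Pi.single j 1))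
            * fderiv ℝ (γ α j) p ((0 : Fin k → ℝ), Pi.single i 1))
      + (∑ α : Fin k, fderiv ℝ (γ α i) p (Pi.single α 1, (0 : Fin n → ℝ))) = 0)
    (ψ : (Fin k → ℝ) → (Fin n → ℝ)) (hψ : ContDiff ℝ (⊤ : ℕ∞) ψ)
    -- ψ is an integral section of the projected k-vector field Zᵞ:
    (hint : ∀ x α i, fderiv ℝ (fun y => ψ y i) x (Pi.single α 1)
        = fderiv ℝ H (Γ (x, ψ x)) (0, 0, Pi.single α (Pi.single i 1))) :
    -- γ ∘ ψ satisfies the Hamilton–De Donder–Weyl equations: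
    ∀ x i,
      (∀ α, fderiv ℝ (fun y => ψ y i) x (Pi.single α 1)
        = fderiv ℝ H (Γ (x, ψ x)) (0, 0, Pi.single α (Pi.single i 1))) ∧
      (∑ α : Fin k, fderiv ℝ (fun y => γ α i (y, ψ y)) x (Pi.single α 1))
        = - fderiv ℝ H (Γ (x, ψ x)) (0, Pi.single i 1, 0) := by
  intro x i
  refine ⟨fun α => hint x α i, ?_⟩
  have hψd : HasFDerivAt ψ (fderiv ℝ ψ x) x := (hψ.differentiable (by simp) x).hasFDerivAt
  -- coordinate derivatives of ψ
  have hcoord : ∀ (j : Fin n) (e : Fin k → ℝ),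
      fderiv ℝ (fun y => ψ y j) x e = fderiv ℝ ψ x e j := by
    intro j e
    let P : (Fin n → ℝ) →L[ℝ] ℝ := ContinuousLinearMap.proj j
    have h : HasFDerivAt (fun y => ψ y j) (P.comp (fderiv ℝ ψ x)) x :=
      P.hasFDerivAt.comp x hψd
    rw [h.fderiv]; rfl
  -- chain rule
  have hchain : ∀ α : Fin k, fderiv ℝ (fun y => γ α i (y, ψ y)) x (Pi.single α 1)
      = fderiv ℝ (γ α i) (x, ψ x) (Pi.single α 1, fderiv ℝ ψ x (Pi.single α 1)) := by
    intro α
    have h : HasFDerivAt (fun y => γ α i (y, ψ y))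
        ((fderiv ℝ (γ α i) (x, ψ x)).comp
          ((ContinuousLinearMap.id ℝ (Fin k → ℝ)).prod (fderiv ℝ ψ x))) x :=
      (((hγ α i).differentiable (by simp) (x, ψ x)).hasFDerivAt).comp x
        (HasFDerivAt.prodMk (hasFDerivAt_id x) hψd)
    rw [h.fderiv]; rfl
  -- decompose D (u, v) = D (u, 0) + ∑ j v j • D (0, e_j)
  have hdecomp : ∀ (α : Fin k) (u : Fin k → ℝ) (v : Fin n → ℝ),
      fderiv ℝ (γ α i) (x, ψ x) (u, v)
      = fderiv ℝ (γ α i) (x, ψ x) (u, 0)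
        + ∑ j : Fin n, v j * fderiv ℝ (γ α i) (x, ψ x) ((0 : Fin k → ℝ), Pi.single j 1) := by
    intro α u v
    set D := fderiv ℝ (γ α i) (x, ψ x)
    have hv : v = ∑ j : Fin n, v j • (Pi.single j 1 : Fin n → ℝ) := by
      funext m
      simp [Finset.sum_apply, Pi.single_apply, mul_comm]
    have : (u, v) = (u, (0 : Fin n → ℝ)) + ∑ j : Fin n,
        v j • (((0 : Fin k → ℝ), (Pi.single j 1 : Fin n → ℝ)) : (Fin k → ℝ) × (Fin n → ℝ)) := by
      rw [Prod.ext_iff]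
      constructor
      · simp [Prod.fst_sum]
      · simpa [Prod.snd_sum] using hv
    rw [this, map_add, map_sum]
    congr 1
    refine Finset.sum_congr rfl fun j _ => ?_
    rw [map_smul, smul_eq_mul]
  calc ∑ α : Fin k, fderiv ℝ (fun y => γ α i (y, ψ y)) x (Pi.single α 1)
      = ∑ α : Fin k, (fderiv ℝ (γ α i) (x, ψ x) (Pi.single α 1, (0 : Fin n → ℝ))
          + ∑ j : Fin n, fderiv ℝ H (Γ (x, ψ x)) (0, 0, Pi.single α (Pi.single j 1))
              * fderiv ℝ (γ α j) (x, ψ x) ((0 : Fin k → ℝ), Pi.single i 1)) := by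
        refine Finset.sum_congr rfl fun α _ => ?_
        rw [hchain α, hdecomp α]
        congr 1
        refine Finset.sum_congr rfl fun j _ => ?_
        rw [← hcoord j, hint x α j, hsym α i j]
    _ = - fderiv ℝ H (Γ (x, ψ x)) (0, Pi.single i 1, 0) := by
        have := hHJ (x, ψ x) i
        rw [Finset.sum_add_distrib]
        linarith [this]
end

section
/- Conversely, let γ be a section with components γ^α_i satisfying ∂γ^α_i/∂q^j = ∂γ^α_j/∂q^i. Suppose that for every point there is an integral section ψ of the projected k-vector field Z^γ (i.e., ∂ψ^i/∂x^α = (∂H/∂p^α_i) ∘ γ ∘ ψ) passing through it, and that for every such ψ the composition γ ∘ ψ satisfies the Hamilton–De Donder–Weyl equations. Then the Hamilton–Jacobi equation holds at every point: ∂H/∂q^i ∘ γ + (∂H/∂p^α_j ∘ γ)(∂γ^α_j/∂q^i) + ∂γ^α_i/∂x^α = 0 for all i. -/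
theorem stmt_8 (k n : ℕ)
    (H : PhaseSpace k n → ℝ) (hH : ContDiff ℝ (⊤ : ℕ∞) H)
    (γ : Fin k → Fin n → ((Fin k → ℝ) × (Fin n → ℝ)) → ℝ)
    (hγ : ∀ α i, ContDiff ℝ (⊤ : ℕ∞) (γ α i))
    -- closedness condition ∂γᵅᵢ/∂qʲ = ∂γᵅⱼ/∂qⁱ:
    (hsym : ∀ α i j p, fderiv ℝ (γ α i) p ((0 : Fin k → ℝ), Pi.single j 1)
        = fderiv ℝ (γ α j) p ((0 : Fin k → ℝ), Pi.single i 1))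
    (Γ : ((Fin k → ℝ) × (Fin n → ℝ)) → PhaseSpace k n)
    (hΓ : ∀ p, Γ p = (p.1, p.2, fun α i => γ α i p))
    -- integrability: through every point passes an integral section of Zᵞ:
    (hintegrable : ∀ (x₀ : Fin k → ℝ) (q₀ : Fin n → ℝ),
      ∃ (U : Set (Fin k → ℝ)) (ψ : (Fin k → ℝ) → (Fin n → ℝ)),
        IsOpen U ∧ x₀ ∈ U ∧ ContDiff ℝ (⊤ : ℕ∞) ψ ∧ ψ x₀ = q₀ ∧
        ∀ x ∈ U, ∀ α i, fderiv ℝ (fun y => ψ y i) x (Pi.single α 1)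
          = fderiv ℝ H (Γ (x, ψ x)) (0, 0, Pi.single α (Pi.single i 1)))
    -- every integral section of Zᵞ yields a solution of the HDW equations:
    (hsol : ∀ (U : Set (Fin k → ℝ)) (ψ : (Fin k → ℝ) → (Fin n → ℝ)),
      IsOpen U → ContDiff ℝ (⊤ : ℕ∞) ψ →
      (∀ x ∈ U, ∀ α i, fderiv ℝ (fun y => ψ y i) x (Pi.single α 1)
          = fderiv ℝ H (Γ (x, ψ x)) (0, 0, Pi.single α (Pi.single i 1))) →
      ∀ x ∈ U, ∀ i,
        (∑ α : Fin k, fderiv ℝ (fun y => γ α i (y, ψ y)) x (Pi.single α 1))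
          = - fderiv ℝ H (Γ (x, ψ x)) (0, Pi.single i 1, 0)) :
    -- then the Hamilton–Jacobi equation holds at every point:
    ∀ (p : (Fin k → ℝ) × (Fin n → ℝ)) (i : Fin n),
      fderiv ℝ H (Γ p) (0, Pi.single i 1, 0)
      + (∑ α : Fin k, ∑ j : Fin n,
          fderiv ℝ H (Γ p) (0, 0, Pi.single α (Pi.single j 1))
            * fderiv ℝ (γ α j) p ((0 : Fin k → ℝ), Pi.single i 1))
      + (∑ α : Fin k, fderiv ℝ (γ α i) p (Pi.single α 1, (0 : Fin n → ℝ))) = 0 := by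

  rintro ⟨x₀, q₀⟩ i
  obtain ⟨U, ψ, hU, hxU, hψ, hψ0, hint⟩ := hintegrable x₀ q₀
  have hs := hsol U ψ hU hψ hint x₀ hxU i
  have hψd : Differentiable ℝ ψ := hψ.differentiable (by simp)
  simp only [← hψ0] at *
  -- derivative of components of ψ
  have hcoord : ∀ (j : Fin n) (v : Fin k → ℝ),
      fderiv ℝ (fun y => ψ y j) x₀ v = fderiv ℝ ψ x₀ v j := by
    intro j v
    have h : HasFDerivAt (fun y => ψ y j)
        (((ContinuousLinearMap.proj j : (Fin n → ℝ) →L[ℝ] ℝ)).comp (fderiv ℝ ψ x₀)) x₀ :=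
      ((ContinuousLinearMap.proj j : (Fin n → ℝ) →L[ℝ] ℝ)).hasFDerivAt.comp x₀ (hψd x₀).hasFDerivAt
    rw [h.fderiv]; rfl
  have hcomp : ∀ α : Fin k,
      fderiv ℝ (fun y => γ α i (y, ψ y)) x₀ (Pi.single α 1)
        = fderiv ℝ (γ α i) (x₀, ψ x₀) (Pi.single α 1, (0 : Fin n → ℝ))
          + ∑ j : Fin n,
              fderiv ℝ H (Γ (x₀, ψ x₀)) (0, 0, Pi.single α (Pi.single j 1))
                * fderiv ℝ (γ α j) (x₀, ψ x₀) ((0 : Fin k → ℝ), Pi.single i 1) := by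
    intro α
    have hf : HasFDerivAt (fun y : Fin k → ℝ => (y, ψ y))
        ((ContinuousLinearMap.id ℝ (Fin k → ℝ)).prod (fderiv ℝ ψ x₀)) x₀ :=
      HasFDerivAt.prodMk (hasFDerivAt_id x₀) (hψd x₀).hasFDerivAt
    have hg : HasFDerivAt (γ α i) (fderiv ℝ (γ α i) (x₀, ψ x₀)) (x₀, ψ x₀) :=
      ((hγ α i).differentiable (by simp) (x₀, ψ x₀)).hasFDerivAt
    have hgc := (hg.comp x₀ hf).fderiv
    rw [show (fun y : Fin k → ℝ => γ α i (y, ψ y)) = (γ α i) ∘ (fun y => (y, ψ y)) from rfl,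
      hgc]
    have hsplit : ((Pi.single α 1 : Fin k → ℝ), fderiv ℝ ψ x₀ (Pi.single α 1))
        = ((Pi.single α 1 : Fin k → ℝ), (0 : Fin n → ℝ))
          + ((0 : Fin k → ℝ), fderiv ℝ ψ x₀ (Pi.single α 1)) := by
      simp
    have : fderiv ℝ (γ α i) (x₀, ψ x₀)
        ((0 : Fin k → ℝ), fderiv ℝ ψ x₀ (Pi.single α 1))
        = ∑ j : Fin n,
            fderiv ℝ H (Γ (x₀, ψ x₀)) (0, 0, Pi.single α (Pi.single j 1))
              * fderiv ℝ (γ α j) (x₀, ψ x₀) ((0 : Fin k → ℝ), Pi.single i 1) := by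
      set L := (fderiv ℝ (γ α i) (x₀, ψ x₀)).comp
        (ContinuousLinearMap.inr ℝ (Fin k → ℝ) (Fin n → ℝ)) with hL
      have hLapp : ∀ w : Fin n → ℝ,
          L w = fderiv ℝ (γ α i) (x₀, ψ x₀) ((0 : Fin k → ℝ), w) := fun w => rfl
      rw [← hLapp]
      have hw : fderiv ℝ ψ x₀ (Pi.single α 1)
          = ∑ j : Fin n, (fderiv ℝ ψ x₀ (Pi.single α 1) j) • (Pi.single j (1 : ℝ) : Fin n → ℝ) := by
        funext m
        simp [Finset.sum_apply, Pi.single_apply]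
      rw [hw, map_sum]
      refine Finset.sum_congr rfl fun j _ => ?_
      rw [map_smul, hLapp, hsym α i j, smul_eq_mul, ← hcoord, hint x₀ hxU α j]
    rw [ContinuousLinearMap.comp_apply]
    show fderiv ℝ (γ α i) (x₀, ψ x₀)
        ((Pi.single α 1 : Fin k → ℝ), fderiv ℝ ψ x₀ (Pi.single α 1)) = _
    rw [hsplit, map_add, this]
  rw [Finset.sum_congr rfl fun α _ => hcomp α, Finset.sum_add_distrib] at hs
  linarith
end

section
/- Let Z = (Z₁,...,Z_k) be a solution of the k-cosymplectic Hamiltonian equations in Darboux coordinates and γ a section of (π_Q)_{1,0} with ∂γ^α_i/∂q^j = ∂γ^α_j/∂q^i. Then the condition ∑_{α=1}^k ((Z_α)^α_j ∘ γ − ∂γ^α_j/∂x^α − ((Z_α)^i ∘ γ) ∂γ^α_j/∂q^i) = 0 for all j is equivalent to the Hamilton–Jacobi equation ∂H/∂q^j ∘ γ + ∑_α ∂γ^α_j/∂x^α + (∂H/∂p^α_i ∘ γ) ∂γ^α_i/∂q^j = 0 for all j. -/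
theorem stmt_9 (k n : ℕ)
    (H : PhaseSpace k n → ℝ) (hH : ContDiff ℝ (⊤ : ℕ∞) H)
    (Z : Fin k → PhaseSpace k n → PhaseSpace k n)
    -- Z solves the k-cosymplectic Hamiltonian equations in coordinates:
    (hZ1 : ∀ m α β, (Z α m).1 β = if β = α then (1:ℝ) else 0)
    (hZ2 : ∀ m α i, (Z α m).2.1 i = fderiv ℝ H m (0, 0, Pi.single α (Pi.single i 1)))
    (hZ3 : ∀ m i, ∑ α : Fin k, (Z α m).2.2 α i = - fderiv ℝ H m (0, Pi.single i 1, 0))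
    (γ : Fin k → Fin n → ((Fin k → ℝ) × (Fin n → ℝ)) → ℝ)
    (hγ : ∀ α i, ContDiff ℝ (⊤ : ℕ∞) (γ α i))
    -- closedness condition ∂γᵅᵢ/∂qʲ = ∂γᵅⱼ/∂qⁱ:
    (hsym : ∀ α i j p, fderiv ℝ (γ α i) p ((0 : Fin k → ℝ), Pi.single j 1)
        = fderiv ℝ (γ α j) p ((0 : Fin k → ℝ), Pi.single i 1))
    (Γ : ((Fin k → ℝ) × (Fin n → ℝ)) → PhaseSpace k n)
    (hΓ : ∀ p, Γ p = (p.1, p.2, fun α i => γ α i p)) :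
    -- Z|_{Im γ} − T¹ₖγ(Zᵞ) ∈ ker ω♯ ∩ ker η♯, in coordinates:
    (∀ (p : (Fin k → ℝ) × (Fin n → ℝ)) (j : Fin n),
      ∑ α : Fin k,
        ((Z α (Γ p)).2.2 α j
          - fderiv ℝ (γ α j) p (Pi.single α 1, (0 : Fin n → ℝ))
          - ∑ i : Fin n, (Z α (Γ p)).2.1 i
              * fderiv ℝ (γ α j) p ((0 : Fin k → ℝ), Pi.single i 1)) = 0)
    ↔
    -- the Hamilton–Jacobi equation:
    (∀ (p : (Fin k → ℝ) × (Fin n → ℝ)) (j : Fin n),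
      fderiv ℝ H (Γ p) (0, Pi.single j 1, 0)
      + (∑ α : Fin k, fderiv ℝ (γ α j) p (Pi.single α 1, (0 : Fin n → ℝ)))
      + (∑ α : Fin k, ∑ i : Fin n,
          fderiv ℝ H (Γ p) (0, 0, Pi.single α (Pi.single i 1))
            * fderiv ℝ (γ α i) p ((0 : Fin k → ℝ), Pi.single j 1)) = 0) := by
  have key : ∀ (p : (Fin k → ℝ) × (Fin n → ℝ)) (j : Fin n),
      (∑ α : Fin k,
        ((Z α (Γ p)).2.2 α j
          - fderiv ℝ (γ α j) p (Pi.single α 1, (0 : Fin n → ℝ))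
          - ∑ i : Fin n, (Z α (Γ p)).2.1 i
              * fderiv ℝ (γ α j) p ((0 : Fin k → ℝ), Pi.single i 1)))
      = -(fderiv ℝ H (Γ p) (0, Pi.single j 1, 0)
      + (∑ α : Fin k, fderiv ℝ (γ α j) p (Pi.single α 1, (0 : Fin n → ℝ)))
      + (∑ α : Fin k, ∑ i : Fin n,
          fderiv ℝ H (Γ p) (0, 0, Pi.single α (Pi.single i 1))
            * fderiv ℝ (γ α i) p ((0 : Fin k → ℝ), Pi.single j 1))) := by
    intro p j
    rw [Finset.sum_sub_distrib, Finset.sum_sub_distrib, hZ3]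
    simp only [hZ2]
    have : ∀ α i, fderiv ℝ (γ α j) p ((0 : Fin k → ℝ), Pi.single i 1)
        = fderiv ℝ (γ α i) p ((0 : Fin k → ℝ), Pi.single j 1) := fun α i => (hsym α i j p).symm
    simp only [this]
    ring
  constructor <;> intro h p j <;> have hk := key p j <;> have hh := h p j <;> linarith
end

section
/- Let φ : ℝ⁴ → ℝ be smooth and define W^α(x,q) = (q − (1/2)φ(x)) √(−g) g^{αβ} ∂φ/∂x^β. If φ satisfies the Euler–Lagrange equation (1/√(−g)) ∂/∂x^α(√(−g) g^{αβ} ∂φ/∂x^β) + m²φ = F′(φ), then the section γ with components γ^α(x,q) = ∂W^α/∂q = √(−g) g^{αβ} ∂φ/∂x^β satisfies the Hamilton–Jacobi equation −√(−g)(F′(q) − m²q)|_{q = φ(x)} + (1/√(−g)) g_{αβ} γ^β ∂γ^α/∂q + ∂γ^α/∂x^α = 0 along q = φ(x). -/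
theorem stmt_14 (g ginv : Matrix (Fin 4) (Fin 4) ℝ) (hgsym : g.IsSymm)
    (hinv : g * ginv = 1) (hinv' : ginv * g = 1)
    (hgdet : g.det < 0) (s : ℝ) (hs : s = Real.sqrt (-g.det))
    (F : ℝ → ℝ) (hF : ContDiff ℝ (⊤ : ℕ∞) F) (m : ℝ)
    (φ : (Fin 4 → ℝ) → ℝ) (hφ : ContDiff ℝ (⊤ : ℕ∞) φ)
    -- γᵅ(x,q) = √(−g) gᵅᵝ ∂φ/∂xᵝ :
    (γ : Fin 4 → ((Fin 4 → ℝ) × ℝ) → ℝ)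
    (hγ : ∀ α x q, γ α (x, q) = s * ∑ β : Fin 4, ginv α β * fderiv ℝ φ x (Pi.single β 1))
    -- φ solves the Euler–Lagrange equation (□ + m²)φ = F′(φ):
    (hEL : ∀ x : Fin 4 → ℝ,
      (1/s) * (∑ α : Fin 4,
        fderiv ℝ (fun y => s * ∑ β : Fin 4, ginv α β * fderiv ℝ φ y (Pi.single β 1)) x
          (Pi.single α 1))
      + m^2 * φ x = deriv F (φ x)) :
    -- γ satisfies the Hamilton–Jacobi equation along q = φ(x):
    ∀ x : Fin 4 → ℝ,
      - s * (deriv F (φ x) - m^2 * φ x)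
      + (1/s) * (∑ α : Fin 4, ∑ β : Fin 4,
          g α β * γ β (x, φ x) * fderiv ℝ (γ α) (x, φ x) ((0 : Fin 4 → ℝ), (1 : ℝ)))
      + (∑ α : Fin 4, fderiv ℝ (γ α) (x, φ x) (Pi.single α 1, (0 : ℝ))) = 0 := by
  intro x
  have hs0 : s ≠ 0 := by
    rw [hs]
    exact ne_of_gt (Real.sqrt_pos.mpr (by linarith))
  set f : Fin 4 → (Fin 4 → ℝ) → ℝ :=
    fun α y => s * ∑ β : Fin 4, ginv α β * fderiv ℝ φ y (Pi.single β 1) with hf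
  have hfsmooth : ∀ α, ContDiff ℝ (⊤ : ℕ∞) (f α) := by
    intro α
    apply ContDiff.mul contDiff_const
    apply ContDiff.sum
    intro β _
    exact contDiff_const.mul ((hφ.fderiv_right (by simp)).clm_apply contDiff_const)
  have hγeq : ∀ α, γ α = fun p : (Fin 4 → ℝ) × ℝ => f α p.1 := by
    intro α
    funext p
    have := hγ α p.1 p.2
    simpa using this
  have hder : ∀ α (v : (Fin 4 → ℝ) × ℝ),
      fderiv ℝ (γ α) (x, φ x) v = fderiv ℝ (f α) x v.1 := by
    intro α v
    rw [hγeq α]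
    have h1 : HasFDerivAt (fun p : (Fin 4 → ℝ) × ℝ => f α p.1)
        ((fderiv ℝ (f α) x).comp (ContinuousLinearMap.fst ℝ (Fin 4 → ℝ) ℝ)) (x, φ x) :=
      by
        have a := (hfsmooth α).differentiable (by simp) x
        have b := a.hasFDerivAt
        have c := (hasFDerivAt_fst (p := (x, φ x)) (𝕜 := ℝ))
        exact b.comp (x, φ x) c
    rw [h1.fderiv]
    rfl
  have hmid : ∀ α, fderiv ℝ (γ α) (x, φ x) ((0 : Fin 4 → ℝ), (1 : ℝ)) = 0 := by
    intro α
    rw [hder α]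
    simp
  have hS : (∑ α : Fin 4, fderiv ℝ (γ α) (x, φ x) (Pi.single α 1, (0 : ℝ)))
      = ∑ α : Fin 4, fderiv ℝ (f α) x (Pi.single α 1) := by
    refine Finset.sum_congr rfl fun α _ => ?_
    rw [hder α]
  have hel := hEL x
  have hEL' : (∑ α : Fin 4, fderiv ℝ (f α) x (Pi.single α 1))
      = s * (deriv F (φ x) - m^2 * φ x) := by
    field_simp at hel ⊢
    linarith
  simp only [hmid, mul_zero, Finset.sum_const_zero, hS, hEL']
  ring
end
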